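/- Let U_tt be the order-3 subgroup of W(E6) stabilizing two decompositions of the 27 lines that meet in type A (all pairwise intersections of their 9-line sets have size 3). Then H^1(U_tt, Pic) ≅ Z/3Z × Z/3Z, where Pic is the rank-7 permutation-induced module on the 27 line classes. -/

import Mathlib

open Finset

/-- The Picard lattice `ℤ^7` of a smooth cubic surface in the blown-up model,
with basis `l, e₁, …, e₆`. -/
abbrev Pic : Type := Fin 7 → ℤ

/-- The intersection form `diag(1, -1, …, -1)`. -/
def inter (u v : Pic) : ℤ := u 0 * v 0 - ∑ i : Fin 6, u i.succ * v i.succ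

/-- The class `l` of a general line in `P²`. -/
def lcl : Pic := fun j => if j = 0 then 1 else 0

/-- The classes `e i` of the exceptional curves. -/
def ee (i : Fin 6) : Pic := fun j => if j = i.succ then 1 else 0

/-- The 6 lines `a i = e i`. -/
def A (i : Fin 6) : Pic := ee i

/-- The 6 lines `b i = 2l - e₁ - ⋯ - e₆ + e i`. -/
def B (i : Fin 6) : Pic := (2 : ℤ) • lcl - (∑ k : Fin 6, ee k) + ee i

/-- The 15 lines `c i j = l - e i - e j`. -/
def C (i j : Fin 6) : Pic := lcl - ee i - ee j

/-- The hyperplane class `h = 3l - e₁ - ⋯ - e₆`. -/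
def hcl : Pic := (3 : ℤ) • lcl - ∑ k : Fin 6, ee k

/-- The canonical class `K = -h`. -/
def Kcl : Pic := -hcl

/-- The set of the 27 lines on a smooth cubic surface (blown-up model). -/
def lines : Finset Pic :=
  (univ.image A) ∪ (univ.image B) ∪
    ((univ ×ˢ univ : Finset (Fin 6 × Fin 6)).filter (fun p => p.1 ≠ p.2)).image
      (fun p => C p.1 p.2)

/-- The 27 lines as a type. -/
abbrev Line : Type := ↥lines

/-- The Weyl group `W(E₆)`: the permutations of the 27 lines preserving the
intersection pairing. -/
def WE6 : Subgroup (Equiv.Perm Line) where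
  carrier := {σ | ∀ x y : Line, inter (σ x).1 (σ y).1 = inter x.1 y.1}
  one_mem' := fun _ _ => rfl
  mul_mem' := by
    intro a b ha hb x y
    simpa [Equiv.Perm.mul_apply] using (ha (b x) (b y)).trans (hb x y)
  inv_mem' := by
    intro a ha x y
    have h := ha (a⁻¹ x) (a⁻¹ y)
    simpa using h.symm

/-- The subgroup of permutations of the 27 lines stabilizing a given set `P` of classes. -/
def Stab (P : Finset Pic) : Subgroup (Equiv.Perm Line) where
  carrier := {σ | ∀ x : Line, x.1 ∈ P ↔ (σ x).1 ∈ P}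
  one_mem' := fun _ => Iff.rfl
  mul_mem' := by
    intro a b ha hb x
    simpa [Equiv.Perm.mul_apply] using (hb x).trans (ha (b x))
  inv_mem' := by
    intro a ha x
    have h := ha (a⁻¹ x)
    simpa using h.symm

/-- The nine 3-element intersection sets of the two type-A decompositions
`St_{(123)(456)}` and `St_{(14)(25)(36)}` (Sarrus scheme). -/
def Iset : Fin 3 → Fin 3 → Finset Pic
  | 0, 0 => {A 0, B 1, C 0 1}
  | 0, 1 => {A 1, B 2, C 1 2}
  | 0, 2 => {A 2, B 0, C 0 2}
  | 1, 0 => {A 3, B 4, C 3 4}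
  | 1, 1 => {A 4, B 5, C 4 5}
  | 1, 2 => {A 5, B 3, C 3 5}
  | 2, 0 => {C 0 4, C 1 3, C 2 5}
  | 2, 1 => {C 0 3, C 1 5, C 2 4}
  | 2, 2 => {C 0 5, C 1 4, C 2 3}

/-- `U_tt`: the subgroup of `W(E₆)` stabilizing all nine sets `I i j`. -/
def Utt : Subgroup (Equiv.Perm Line) :=
  WE6 ⊓ ⨅ i : Fin 3, ⨅ j : Fin 3, Stab (Iset i j)


/-! An element of `U_tt` preserves the pairing and each triple `Iset i j`, so if it fixes the
lines of a set `R` it also fixes every line that is the only one in its triple with its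
intersection numbers against `R`; starting from `R = {A 0}`, three rounds of this fix all 27 lines.
The triple `Iset 0 0 ∋ A 0` is an orbit of an explicit element `g` of order 3, hence `U_tt = ⟨g⟩`.
For a cyclic group `H¹ = ker N / im (g - 1)` with `N = 1 + g + g²`, and on `ℤ⁷` this quotient is
`(ℤ/3)²`, detected by two linear forms reduced mod 3. -/

universe u

open Matrix

theorem Representation.norm_eq_sum_range_orderOf {k G V : Type*} [CommSemiring k] [Group G]
    [Fintype G] [AddCommMonoid V] [Module k V] (ρ : Representation k G V) {g : G}
    (hg : ∀ x, x ∈ Subgroup.zpowers g) : ρ.norm = ∑ i ∈ range (orderOf g), ρ g ^ i := by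
  classical
  rw [Representation.norm, ← IsCyclic.image_range_orderOf hg, sum_image fun i hi j hj hij =>
    pow_injOn_Iio_orderOf (by simpa using hi) (by simpa using hj) hij]
  simp only [map_pow]

noncomputable def groupCohomology.H1EquivOfForallMemZpowers {k G : Type u} [CommRing k]
    [Group G] [Fintype G] (A : Rep k G) (g : G) (hg : ∀ x, x ∈ Subgroup.zpowers g) :
    groupCohomology.H1 A ≃ₗ[k] LinearMap.ker A.ρ.norm ⧸
      (LinearMap.range (A.ρ g - 1)).comap (LinearMap.ker A.ρ.norm).subtype := by
  letI : IsCyclic G := ⟨g, fun x => Subgroup.mem_zpowers_iff.mp (hg x)⟩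
  letI : CommGroup G := IsCyclic.commGroup
  let π := Rep.FiniteCyclicGroup.groupCohomologyπOdd A g hg 1 odd_one
  have hπ : Function.Surjective π.hom := by
    rw [← ModuleCat.epi_iff_surjective]
    have := CategoryTheory.epi_comp (Rep.FiniteCyclicGroup.subCompNormHom A g).homologyπ
      (Rep.FiniteCyclicGroup.groupCohomologyIsoOdd A g hg 1 odd_one).inv
    exact CategoryTheory.epi_comp
      (Rep.FiniteCyclicGroup.subCompNormHom A g).moduleCatCyclesIso.inv _
  have hker : LinearMap.ker π.hom =
      (LinearMap.range (A.ρ g - 1)).comap (LinearMap.ker A.ρ.norm).subtype := by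
    ext x
    exact Rep.FiniteCyclicGroup.groupCohomologyπOdd_eq_zero_iff A g hg 1 odd_one x
  exact (π.hom.quotKerEquivOfSurjective hπ).symm.trans (Submodule.quotEquivOfEq _ _ hker)

lemma Utt.inter_apply_apply {σ : Equiv.Perm Line} (hσ : σ ∈ Utt) (x y : Line) :
    inter (σ x).1 (σ y).1 = inter x.1 y.1 :=
  (Subgroup.mem_inf.mp hσ).1 x y

lemma Utt.apply_mem_Iset_iff {σ : Equiv.Perm Line} (hσ : σ ∈ Utt) (i j : Fin 3) (x : Line) :
    (σ x).1 ∈ Iset i j ↔ x.1 ∈ Iset i j :=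
  (Subgroup.mem_iInf.mp (Subgroup.mem_iInf.mp (Subgroup.mem_inf.mp hσ).2 i) j x).symm

def pinStep (R : Finset Line) : Finset Line :=
  univ.filter fun x => ∃ i j, x.1 ∈ Iset i j ∧ ∀ y : Line, y.1 ∈ Iset i j →
    (∀ r ∈ R, inter y.1 r.1 = inter x.1 r.1) → y = x

lemma apply_eq_self_of_mem_pinStep {σ : Equiv.Perm Line} (hσ : σ ∈ Utt) {R : Finset Line}
    (hR : ∀ r ∈ R, σ r = r) {x : Line} (hx : x ∈ pinStep R) : σ x = x := by
  obtain ⟨i, j, hx, huniq⟩ := (mem_filter.mp hx).2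
  refine huniq (σ x) ((Utt.apply_mem_Iset_iff hσ i j x).mpr hx) fun r hr => ?_
  rw [← Utt.inter_apply_apply hσ x r, hR r hr]

lemma apply_eq_self_of_mem_iterate_pinStep {σ : Equiv.Perm Line} (hσ : σ ∈ Utt)
    {R : Finset Line} (hR : ∀ r ∈ R, σ r = r) (n : ℕ) :
    ∀ x ∈ pinStep^[n] R, σ x = x := by
  induction n with
  | zero => exact hR
  | succ n ih =>
    rw [Function.iterate_succ_apply']
    exact fun x => apply_eq_self_of_mem_pinStep hσ ih

def a₀ : Line := ⟨A 0, by decide⟩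

set_option maxRecDepth 10000 in
lemma pinStep_iterate_three : pinStep^[3] {a₀} = univ := by decide

lemma eq_one_of_mem_Utt_of_apply_a₀ {σ : Equiv.Perm Line} (hσ : σ ∈ Utt) (h : σ a₀ = a₀) :
    σ = 1 := by
  ext x : 1
  refine apply_eq_self_of_mem_iterate_pinStep hσ (R := {a₀}) (by simpa using h) 3 x ?_
  rw [pinStep_iterate_three]
  exact mem_univ x

-- It maps `A 0 ↦ B 1 ↦ C 0 1` and cycles every triple `Iset i j` in the same way.
def gMat : Matrix (Fin 7) (Fin 7) ℤ :=
  !![4, 2, 2, 2, 1, 1, 1; -1, -1, -1, 0, 0, 0, 0; -1, 0, -1, -1, 0, 0, 0; -1, -1, 0, -1, 0, 0, 0;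
     -2, -1, -1, -1, -1, 0, -1; -2, -1, -1, -1, -1, -1, 0; -2, -1, -1, -1, 0, -1, -1]

lemma gMat_pow_three : gMat ^ 3 = 1 := by decide

lemma gMat_mulVec_mem_lines : ∀ v ∈ lines, gMat *ᵥ v ∈ lines := by decide

lemma gMat_mulVec_mulVec_mulVec (v : Pic) : gMat *ᵥ (gMat *ᵥ (gMat *ᵥ v)) = v := by
  rw [mulVec_mulVec, mulVec_mulVec, ← pow_three', gMat_pow_three, one_mulVec]

def gLine : Equiv.Perm Line where
  toFun x := ⟨gMat *ᵥ x.1, gMat_mulVec_mem_lines x.1 x.2⟩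
  invFun x := ⟨gMat *ᵥ (gMat *ᵥ x.1),
    gMat_mulVec_mem_lines _ (gMat_mulVec_mem_lines x.1 x.2)⟩
  left_inv x := Subtype.ext (gMat_mulVec_mulVec_mulVec x.1)
  right_inv x := Subtype.ext (gMat_mulVec_mulVec_mulVec x.1)

lemma gLine_mem_Utt : gLine ∈ Utt := by
  refine Subgroup.mem_inf.mpr ⟨?_, Subgroup.mem_iInf.mpr fun i => Subgroup.mem_iInf.mpr fun j => ?_⟩
  · show ∀ x y : Line, inter (gMat *ᵥ x.1) (gMat *ᵥ y.1) = inter x.1 y.1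
    decide
  · show ∀ x : Line, x.1 ∈ Iset i j ↔ gMat *ᵥ x.1 ∈ Iset i j
    revert i j
    decide

lemma orderOf_gLine : orderOf gLine = 3 := by
  have : Fact (Nat.Prime 3) := ⟨Nat.prime_three⟩
  refine orderOf_eq_prime (Equiv.ext fun x => Subtype.ext (gMat_mulVec_mulVec_mulVec x.1))
    fun h => ?_
  have := congrArg (fun σ : Equiv.Perm Line => (σ a₀).1) h
  revert this
  decide

lemma exists_pow_gLine_apply_a₀ :
    ∀ x : Line, x.1 ∈ Iset 0 0 → ∃ k : Fin 3, (gLine ^ (k : ℕ)) a₀ = x := by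
  decide

lemma exists_pow_gLine_eq_of_mem_Utt {σ : Equiv.Perm Line} (hσ : σ ∈ Utt) :
    ∃ k : ℕ, gLine ^ k = σ := by
  obtain ⟨k, hk⟩ :=
    exists_pow_gLine_apply_a₀ (σ a₀) ((Utt.apply_mem_Iset_iff hσ 0 0 a₀).mpr (by decide))
  have hfix : ((gLine ^ (k : ℕ))⁻¹ * σ) a₀ = a₀ := by
    rw [Equiv.Perm.mul_apply, ← hk, Equiv.Perm.inv_eq_iff_eq]
  exact ⟨k, inv_mul_eq_one.mp (eq_one_of_mem_Utt_of_apply_a₀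
    (mul_mem (inv_mem (pow_mem gLine_mem_Utt _)) hσ) hfix)⟩

def gUtt : Utt := ⟨gLine, gLine_mem_Utt⟩

lemma mem_zpowers_gUtt (σ : Utt) : σ ∈ Subgroup.zpowers gUtt := by
  obtain ⟨k, hk⟩ := exists_pow_gLine_eq_of_mem_Utt σ.2
  exact ⟨k, Subtype.ext (by simpa [gUtt] using hk)⟩

lemma orderOf_gUtt : orderOf gUtt = 3 := by
  rw [gUtt, Subgroup.orderOf_mk, orderOf_gLine]

lemma card_Utt : Nat.card Utt = 3 := by
  rw [← orderOf_eq_card_of_forall_mem_zpowers mem_zpowers_gUtt, orderOf_gUtt]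

def normMat : Matrix (Fin 7) (Fin 7) ℤ := ∑ i ∈ range 3, gMat ^ i

section

variable (ρ : Representation ℤ Utt Pic)
  (hρ : ∀ σ : Utt, ∀ x : Line, ρ σ x.1 = ((σ : Equiv.Perm Line) x).1)
include hρ

lemma rho_gUtt : ρ gUtt = toLinAlgEquiv' gMat := by
  have hline (x : Line) : ρ gUtt x.1 = gMat *ᵥ x.1 := hρ gUtt x
  refine (Pi.basisFun ℤ (Fin 7)).ext fun i => ?_
  rw [Pi.basisFun_apply, toLinAlgEquiv'_apply]
  cases i using Fin.cases with
  | zero =>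
    rw [show (Pi.single 0 1 : Pic) = C 0 1 + A 0 + A 1 by decide, map_add, map_add,
      mulVec_add, mulVec_add, hline ⟨C 0 1, by decide⟩, hline ⟨A 0, by decide⟩,
      hline ⟨A 1, by decide⟩]
  | succ k =>
    have hA : ∀ k : Fin 6, (Pi.single k.succ 1 : Pic) = A k ∧ A k ∈ lines := by decide
    rw [(hA k).1]
    exact hline ⟨A k, (hA k).2⟩

lemma rho_norm [Fintype Utt] : ρ.norm = toLinAlgEquiv' normMat := by
  rw [ρ.norm_eq_sum_range_orderOf mem_zpowers_gUtt, orderOf_gUtt, rho_gUtt ρ hρ, normMat,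
    map_sum]
  simp only [map_pow]

end

/- These come from a Smith normal form of `gMat - 1` on `ker normMat`: `h1Gens` spans
`ker normMat` modulo `im (gMat - 1)`, `h1Coords` reads off its coordinates, `3 • h1Gens` lies in
`im (gMat - 1)`, and `splitMat` inverts `gMat - 1` on the rest of `ker normMat`. -/
def h1Gens : Matrix (Fin 7) (Fin 2) ℤ :=
  !![-1, 0; 1, 0; 1, 0; -1, 1; 2, -1; 0, 0; 0, 0]

def h1Coords : Matrix (Fin 2) (Fin 7) ℤ :=
  !![2, 3, -1, 1, 1, 0, 2; -2, 1, -1, 0, -1, 0, -2]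

def liftMat : Matrix (Fin 7) (Fin 2) ℤ :=
  !![-1, 2; 0, -1; -2, 0; 2, -2; -2, 1; 2, -1; 0, 0]

def splitMat : Matrix (Fin 7) (Fin 7) ℤ :=
  !![0, 0, 0, 0, 0, 0, 0; 0, 0, 0, 0, 0, 0, 0; 2, 2, -1, 1, 1, 0, 2; -2, -1, 0, -1, -1, 0, -2;
     3, 2, 0, 1, 1, 0, 3; 0, -1, 1, 0, 0, 0, -1; 0, 0, 0, 0, 0, 0, 0]

lemma normMat_mul_h1Gens : normMat * h1Gens = 0 := by decide

lemma h1Coords_mul_h1Gens : h1Coords * h1Gens = 1 := by decide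

lemma h1Coords_mul_gMat_sub_one :
    h1Coords * (gMat - 1) = (3 : ℤ) • !![-1, -2, 0, 0, 0, 0, -1; 0, -1, 0, 0, 0, 0, 1] := by
  decide

lemma gMat_sub_one_mul_liftMat : (gMat - 1) * liftMat = (3 : ℤ) • h1Gens := by decide

lemma gMat_sub_one_mul_splitMat_add :
    (gMat - 1) * splitMat + h1Gens * h1Coords = 1 + single 5 1 1 * normMat := by decide

def h1Map : Pic →ₗ[ℤ] Fin 2 → ZMod 3 :=
  (Int.castAddHom (ZMod 3)).toIntLinearMap.compLeft (Fin 2) ∘ₗ h1Coords.mulVecLin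

lemma h1Map_eq_zero_iff (v : Pic) : h1Map v = 0 ↔ ∃ c, h1Coords *ᵥ v = (3 : ℤ) • c := by
  simp only [h1Map, LinearMap.coe_comp, Function.comp_apply, mulVecLin_apply, funext_iff,
    LinearMap.compLeft_apply, AddMonoidHom.coe_toIntLinearMap, Int.coe_castAddHom,
    Pi.zero_apply, Pi.smul_apply, smul_eq_mul, ZMod.intCast_zmod_eq_zero_iff_dvd, Nat.cast_ofNat]
  exact ⟨fun h => ⟨fun i => (h i).choose, fun i => (h i).choose_spec⟩,
    fun ⟨c, hc⟩ i => ⟨c i, hc i⟩⟩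

lemma mem_range_gMat_sub_one_iff {v : Pic} (hv : normMat *ᵥ v = 0) :
    v ∈ LinearMap.range (toLinAlgEquiv' (gMat - 1)) ↔ h1Map v = 0 := by
  rw [h1Map_eq_zero_iff]
  constructor
  · rintro ⟨w, rfl⟩
    refine ⟨!![-1, -2, 0, 0, 0, 0, -1; 0, -1, 0, 0, 0, 0, 1] *ᵥ w, ?_⟩
    rw [toLinAlgEquiv'_apply, mulVec_mulVec, h1Coords_mul_gMat_sub_one, smul_mulVec]
  · rintro ⟨c, hc⟩
    refine ⟨splitMat *ᵥ v + liftMat *ᵥ c, ?_⟩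
    calc (gMat - 1) *ᵥ (splitMat *ᵥ v + liftMat *ᵥ c)
        = (gMat - 1) *ᵥ (splitMat *ᵥ v) + h1Gens *ᵥ ((3 : ℤ) • c) := by
          rw [mulVec_add, mulVec_mulVec c, gMat_sub_one_mul_liftMat, smul_mulVec, mulVec_smul]
      _ = ((gMat - 1) * splitMat + h1Gens * h1Coords) *ᵥ v := by
          rw [← hc, add_mulVec, mulVec_mulVec, mulVec_mulVec]
      _ = v := by
          rw [gMat_sub_one_mul_splitMat_add, add_mulVec, one_mulVec, ← mulVec_mulVec, hv,
            mulVec_zero, add_zero]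

lemma exists_h1Map_eq (z : Fin 2 → ZMod 3) : ∃ v, normMat *ᵥ v = 0 ∧ h1Map v = z := by
  refine ⟨h1Gens *ᵥ fun i => ((z i).val : ℤ), ?_, ?_⟩
  · rw [mulVec_mulVec, normMat_mul_h1Gens, zero_mulVec]
  · ext i
    simp [h1Map, mulVec_mulVec, h1Coords_mul_h1Gens]

noncomputable def h1Equiv : (LinearMap.ker (toLinAlgEquiv' normMat) ⧸
    (LinearMap.range (toLinAlgEquiv' (gMat - 1))).comap
      (LinearMap.ker (toLinAlgEquiv' normMat)).subtype) ≃ₗ[ℤ] Fin 2 → ZMod 3 := by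
  refine (Submodule.quotEquivOfEq _ _ ?_).trans
    ((h1Map ∘ₗ Submodule.subtype _).quotKerEquivOfSurjective ?_)
  · ext ⟨v, hv⟩
    exact mem_range_gMat_sub_one_iff (by simpa [toLinAlgEquiv'_apply] using hv)
  · intro z
    obtain ⟨v, hv, rfl⟩ := exists_h1Map_eq z
    exact ⟨⟨v, by simpa [toLinAlgEquiv'_apply] using hv⟩, rfl⟩

/-- `U_tt` has order 3 and `H¹(U_tt, Pic) ≅ ℤ/3ℤ × ℤ/3ℤ`, where `Pic` is the rank-7
permutation-induced module on the 27 line classes. -/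
theorem stmt16 (ρ : Representation ℤ Utt Pic)
    (hρ : ∀ σ : Utt, ∀ x : Line, ρ σ x.1 = ((σ : Equiv.Perm Line) x).1) :
    Nat.card Utt = 3 ∧
    Nonempty (groupCohomology.H1 (Rep.of ρ) ≃+ (ZMod 3 × ZMod 3)) := by
  classical
  refine ⟨card_Utt, ?_⟩
  have e := groupCohomology.H1EquivOfForallMemZpowers (Rep.of ρ) gUtt mem_zpowers_gUtt
  rw [Rep.of_ρ, rho_norm ρ hρ, rho_gUtt ρ hρ, ← map_one (toLinAlgEquiv' (R := ℤ) (n := Fin 7)),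
    ← map_sub] at e
  exact ⟨(e.trans (h1Equiv.trans (LinearEquiv.finTwoArrow ℤ (ZMod 3)))).toAddEquiv⟩
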